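/- In a 2-dimensional knight graph, if a Hamiltonian cycle (a^i) contains a well-oriented site (a^n, a^{n+1}, a^m, a^{m+1}) with a^{n+1}−a^m = a^{m+1}−a^n ∈ {±2e_i}, then on the board B × [1,2] the closed walk (a^n,1) → (a^{m+1},2) → (a^{m+2},2) → ... → (a^m,2) → (a^{n+1},1) → ... → (a^n,1) is a Hamiltonian cycle: it visits every square of B × [1,2] exactly once and consecutive squares are joined by knight moves. -/

import Mathlib

/-!
Split `ZMod (2N)` into the upper sheet `{1, …, N}` and the lower sheet `{N + 1, …, 2N}`.
Each sheet is a full period mod `N`, so `j ↦ (j mod N, sheet of j)` is a bijection onto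
`ZMod N × Bool`, and the walk is this bijection followed by `(m, upper) ↦ (a^{q+m}, 2)`,
`(m, lower) ↦ (a^{p+m}, 1)`, which is a bijection onto `B × [1, 2]`. Inside a sheet consecutive
squares are lifts of consecutive squares of the tour. The sheet changes only at `j = 0` and
`j = N`, where `m = 0`, and there the steps `(a^p, 1) → (a^{q+1}, 2)` and `(a^q, 2) → (a^{p+1}, 1)`
are knight moves: the planar displacement is `±2eᵢ` and the height changes by `1`.
-/

/-- A knight move in `k` dimensions: coordinates differ in exactly two places,
one by `±1` and one by `±2`. -/
def knightMove {k : ℕ} (a b : Fin k → ℤ) : Prop :=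
  ∃ i j : Fin k, i ≠ j ∧ |a i - b i| = 1 ∧ |a j - b j| = 2 ∧
    ∀ l, l ≠ i → l ≠ j → a l = b l

/-- Membership in the board `∏ [1, n i]`. -/
def onBoard {k : ℕ} (n : Fin k → ℕ) (a : Fin k → ℤ) : Prop :=
  ∀ i, 1 ≤ a i ∧ a i ≤ (n i : ℤ)

/-- A closed knight's tour of the board `∏ [1, n i]`, presented as a cyclic
sequence `a : ZMod N → (Fin k → ℤ)` visiting every board square exactly once,
with consecutive squares joined by knight moves. -/
def IsClosedTour {k : ℕ} (n : Fin k → ℕ) (N : ℕ) (a : ZMod N → Fin k → ℤ) : Prop :=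
  0 < N ∧ (∀ i, onBoard n (a i)) ∧ Function.Injective a ∧
    (∀ x, onBoard n x → ∃ i, a i = x) ∧ ∀ i, knightMove (a i) (a (i + 1))

open Function

section Lift

variable {k : ℕ}

theorem knightMove.snoc {x y : Fin k → ℤ} (h : knightMove x y) (c : ℤ) :
    knightMove (Fin.snoc x c : Fin (k + 1) → ℤ) (Fin.snoc y c) := by
  obtain ⟨i, j, hij, hi, hj, hrest⟩ := h
  refine ⟨i.castSucc, j.castSucc, Fin.castSucc_injective _ |>.ne hij, by simpa, by simpa, ?_⟩
  intro l
  induction l using Fin.lastCases with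
  | last => simp
  | cast l => simpa [Fin.castSucc_inj] using hrest l

theorem knightMove_snoc_of_sub_eq {x y : Fin k → ℤ} {i : Fin k} {ε : ℤ} (hε : |ε| = 2)
    (hxy : ∀ l, y l - x l = if l = i then ε else 0) {c d : ℤ} (hcd : |c - d| = 1) :
    knightMove (Fin.snoc x c : Fin (k + 1) → ℤ) (Fin.snoc y d) := by
  refine ⟨Fin.last k, i.castSucc, (Fin.castSucc_lt_last i).ne', by simpa, ?_, ?_⟩
  · have hi := hxy i
    rw [if_pos rfl] at hi
    rw [Fin.snoc_castSucc, Fin.snoc_castSucc, abs_sub_comm, hi, hε]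
  · intro l
    induction l using Fin.lastCases with
    | last => simp
    | cast l =>
      intro _ hl
      have hl' := hxy l
      rw [if_neg (ne_of_apply_ne _ hl)] at hl'
      rw [Fin.snoc_castSucc, Fin.snoc_castSucc]
      omega

theorem onBoard_snoc {n : Fin k → ℕ} {x : Fin k → ℤ} {c : ℤ} :
    onBoard (Fin.snoc n 2 : Fin (k + 1) → ℕ) (Fin.snoc x c) ↔ onBoard n x ∧ 1 ≤ c ∧ c ≤ 2 := by
  simp [onBoard, Fin.forall_fin_succ']

end Lift

section Sheets

variable {N : ℕ}

def sheetCoord (N : ℕ) (j : ZMod (2 * N)) : ZMod N × Bool :=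
  (ZMod.castHom (dvd_mul_left N 2) (ZMod N) j, decide (j.val ≠ 0 ∧ j.val ≤ N))

theorem sheetCoord_add_one_fst (j : ZMod (2 * N)) :
    (sheetCoord N (j + 1)).1 = (sheetCoord N j).1 + 1 := by
  simp [sheetCoord]

variable [NeZero N]

theorem sheetCoord_injective : Injective (sheetCoord N) := by
  intro j₁ j₂ h
  simp only [sheetCoord, Prod.mk.injEq, ZMod.castHom_apply, ← ZMod.natCast_val,
    ZMod.natCast_eq_natCast_iff', decide_eq_decide] at h
  obtain ⟨hmod, hsheet⟩ := h
  have hN := NeZero.pos N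
  have h₁ := ZMod.val_lt j₁
  have h₂ := ZMod.val_lt j₂
  have := Nat.div_add_mod j₁.val N
  have := Nat.div_add_mod j₂.val N
  have := Nat.mod_lt j₁.val hN
  have : j₁.val / N < 2 := Nat.div_lt_of_lt_mul (by linarith)
  have : j₂.val / N < 2 := Nat.div_lt_of_lt_mul (by linarith)
  apply ZMod.val_injective
  interval_cases j₁.val / N <;> interval_cases j₂.val / N <;> omega

theorem sheetCoord_bijective : Bijective (sheetCoord N) :=
  (Fintype.bijective_iff_injective_and_card _).mpr ⟨sheetCoord_injective, by simp [mul_comm]⟩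

theorem sheetCoord_fst_eq_zero_of_snd_ne {j : ZMod (2 * N)}
    (h : (sheetCoord N j).2 ≠ (sheetCoord N (j + 1)).2) : (sheetCoord N j).1 = 0 := by
  have hN := NeZero.pos N
  have hval : (j + 1).val = (j.val + 1) % (2 * N) := by
    rw [ZMod.val_add, ZMod.val_one'' (by omega)]
  have hj := ZMod.val_lt j
  have hsucc : (j + 1).val = j.val + 1 ∨ (j.val + 1 = 2 * N ∧ (j + 1).val = 0) := by
    rcases (show j.val + 1 ≤ 2 * N from hj).lt_or_eq with hlt | heq
    · exact .inl (hval.trans (Nat.mod_eq_of_lt hlt))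
    · exact .inr ⟨heq, by rw [hval, heq, Nat.mod_self]⟩
  simp only [sheetCoord, ne_eq, decide_eq_decide] at h
  have hj0 : j.val = 0 ∨ j.val = N := by omega
  simp only [sheetCoord, ZMod.castHom_apply, ← ZMod.natCast_val]
  rcases hj0 with h0 | h0 <;> simp [h0]

end Sheets

section SheetLift

variable {k N : ℕ} {n : Fin k → ℕ} {a : ZMod N → Fin k → ℤ} {p q : ZMod N}

def sheetLift (a : ZMod N → Fin k → ℤ) (p q : ZMod N) : ZMod N × Bool → Fin (k + 1) → ℤ
  | (m, true) => Fin.snoc (a (q + m)) 2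
  | (m, false) => Fin.snoc (a (p + m)) 1

theorem sheetLift_injective (ha : Injective a) : Injective (sheetLift a p q) := by
  rintro ⟨m₁, _ | _⟩ ⟨m₂, _ | _⟩ h <;>
    simp_all [sheetLift, ha.eq_iff]

theorem onBoard_sheetLift (ha : ∀ m, onBoard n (a m)) (x : ZMod N × Bool) :
    onBoard (Fin.snoc n 2) (sheetLift a p q x) := by
  obtain ⟨m, _ | _⟩ := x <;> simp [sheetLift, onBoard_snoc, ha]

theorem exists_sheetLift_eq (ha : ∀ x, onBoard n x → ∃ m, a m = x) {x : Fin (k + 1) → ℤ}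
    (hx : onBoard (Fin.snoc n 2) x) : ∃ y, sheetLift a p q y = x := by
  rw [← Fin.snoc_init_self x, onBoard_snoc] at hx
  obtain ⟨hinit, hlast⟩ := hx
  obtain ⟨m, hm⟩ := ha _ hinit
  rcases (show x (Fin.last k) = 1 ∨ x (Fin.last k) = 2 by omega) with h | h
  · exact ⟨(m - p, false), by simp [sheetLift, hm, ← h]⟩
  · exact ⟨(m - q, true), by simp [sheetLift, hm, ← h]⟩

theorem knightMove_sheetLift (ha : ∀ m, knightMove (a m) (a (m + 1))) {i : Fin k} {ε : ℤ}
    (hε : |ε| = 2) (h₁ : ∀ l, a (p + 1) l - a q l = if l = i then ε else 0)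
    (h₂ : ∀ l, a (q + 1) l - a p l = if l = i then ε else 0)
    {m : ZMod N} {b b' : Bool} (hm : b ≠ b' → m = 0) :
    knightMove (sheetLift a p q (m, b)) (sheetLift a p q (m + 1, b')) := by
  cases b <;> cases b'
  · simpa [sheetLift, add_assoc] using (ha (p + m)).snoc 1
  · simpa [sheetLift, hm] using knightMove_snoc_of_sub_eq hε h₂ (by norm_num)
  · simpa [sheetLift, hm] using knightMove_snoc_of_sub_eq hε h₁ (by norm_num)
  · simpa [sheetLift, add_assoc] using (ha (q + m)).snoc 2

theorem IsClosedTour.sheetLift_sheetCoord (ha : IsClosedTour n N a) {i : Fin k} {ε : ℤ}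
    (hε : |ε| = 2) (h₁ : ∀ l, a (p + 1) l - a q l = if l = i then ε else 0)
    (h₂ : ∀ l, a (q + 1) l - a p l = if l = i then ε else 0) :
    IsClosedTour (Fin.snoc n 2) (2 * N) (fun j => sheetLift a p q (sheetCoord N j)) := by
  obtain ⟨hN, hboard, hinj, hsurj, hmove⟩ := ha
  have := NeZero.of_pos hN
  refine ⟨by positivity, fun j => onBoard_sheetLift hboard _,
    (sheetLift_injective hinj).comp sheetCoord_injective, fun x hx => ?_, fun j => ?_⟩
  · obtain ⟨y, rfl⟩ := exists_sheetLift_eq (p := p) (q := q) hsurj hx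
    obtain ⟨j, rfl⟩ := sheetCoord_bijective.2 y
    exact ⟨j, rfl⟩
  · have := knightMove_sheetLift hmove hε h₁ h₂ (sheetCoord_fst_eq_zero_of_snd_ne (j := j))
    rwa [← sheetCoord_add_one_fst] at this

theorem sheetLift_sheetCoord [NeZero N] (j : ZMod (2 * N)) :
    sheetLift a p q (sheetCoord N j) =
      if j.val = 0 then Fin.snoc (a p) 1
      else if j.val ≤ N then Fin.snoc (a (q + (j.val : ZMod N))) 2
      else Fin.snoc (a (p + ((j.val - N : ℕ) : ZMod N))) 1 := by
  simp only [sheetCoord, ZMod.castHom_apply, ← ZMod.natCast_val]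
  split_ifs with h0 hN
  · simp [sheetLift, h0]
  · simp [sheetLift, h0, hN]
  · simp [sheetLift, h0, hN, Nat.cast_sub (not_le.mp hN).le]

end SheetLift

/-- Example "ex:2d": given a closed tour `a` of a 2-dimensional board containing
a well-oriented site with `a^{p+1} − a^q = a^{q+1} − a^p ∈ {±2eᵢ}`, the explicit
closed walk `(a^p,1) → (a^{q+1},2) → (a^{q+2},2) → … → (a^q,2) → (a^{p+1},1)
→ … → (a^p,1)` is a Hamiltonian cycle of the knight graph on `B × [1,2]`. -/
theorem explicit_walk_is_tour (n : Fin 2 → ℕ) (N : ℕ)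
    (a : ZMod N → Fin 2 → ℤ) (ha : IsClosedTour n N a)
    (p q : ZMod N) (i : Fin 2) (ε : ℤ) (hε : ε = 2 ∨ ε = -2)
    (h1 : ∀ l, a (p + 1) l - a q l = if l = i then ε else 0)
    (h2 : ∀ l, a (q + 1) l - a p l = if l = i then ε else 0) :
    IsClosedTour (Fin.snoc n 2) (2 * N)
      (fun j : ZMod (2 * N) =>
        if j.val = 0 then Fin.snoc (a p) 1
        else if j.val ≤ N then Fin.snoc (a (q + (j.val : ZMod N))) 2
        else Fin.snoc (a (p + ((j.val - N : ℕ) : ZMod N))) 1) := by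
  have := NeZero.of_pos ha.1
  simpa only [sheetLift_sheetCoord] using
    ha.sheetLift_sheetCoord ((abs_eq (by norm_num)).mpr hε) h1 h2
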